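/- Let q be an odd prime power which is a perfect square, and suppose q = p^{2er} with r ≥ 2. Let γ be a primitive element of F_q, δ = γ^{(√q+1)/2}, and L(X) = δ X^{√q}. Then f(x,y) = Tr_{q/p^e}(x·L(y)) is a non-degenerate alternating F_{p^e}-bilinear form on F_q viewed as a 2r-dimensional F_{p^e}-vector space. -/

import Mathlib

/-!
The map `Tr z = Σ_{j<2r} z^{p^{je}}` is the relative trace of `F_q / F_{p^e}`: it is additive,
`F_{p^e}`-linear and takes values fixed by the `p^e`-Frobenius, which gives bilinearity.
As `γ` is primitive, `γ^{(q-1)/2} = -1`, whence `δ^{√q} = -δ`; so `u = x δ x^{√q}` satisfies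
`u^{√q} = -u`, and the conjugates `u^{p^{je}}` and `u^{p^{(r+j)e}}` cancel in pairs in `Tr u`.
Non-degeneracy holds because `Tr` is a nonzero polynomial of degree `p^{(2r-1)e} < q`, so
it does not vanish on all of `F_q`.
-/

open Finset Polynomial

section FrobeniusTrace

variable {R : Type*} [CommRing R]

def frobeniusTrace (p e n : ℕ) (z : R) : R :=
  ∑ j ∈ range n, z ^ p ^ (j * e)

lemma pow_pow_mul_eq_self_of_pow_eq_self {p e : ℕ} {θ : R} (hθ : θ ^ p ^ e = θ) (j : ℕ) :
    θ ^ p ^ (j * e) = θ := by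
  induction j with
  | zero => simp
  | succ j ih => rw [add_one_mul, pow_add, pow_mul, ih, hθ]

lemma frobeniusTrace_mul_of_pow_eq_self {p e : ℕ} (n : ℕ) {θ : R} (hθ : θ ^ p ^ e = θ) (z : R) :
    frobeniusTrace p e n (θ * z) = θ * frobeniusTrace p e n z := by
  simp only [frobeniusTrace, mul_sum, mul_pow, pow_pow_mul_eq_self_of_pow_eq_self hθ]

lemma frobeniusTrace_two_mul_eq_zero {p e n : ℕ} (hp : Odd p) {u : R}
    (hu : u ^ p ^ (n * e) = -u) : frobeniusTrace p e (2 * n) u = 0 := by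
  have hsecond_half : ∀ j, u ^ p ^ ((n + j) * e) = -u ^ p ^ (j * e) := fun j => by
    rw [add_mul, pow_add, pow_mul, hu, hp.pow.neg_pow]
  simp only [frobeniusTrace, two_mul, sum_range_add, hsecond_half, sum_neg_distrib,
    add_neg_cancel]

variable (p : ℕ) [ExpChar R p] (e n : ℕ)

lemma frobeniusTrace_add (a b : R) :
    frobeniusTrace p e n (a + b) = frobeniusTrace p e n a + frobeniusTrace p e n b := by
  simp only [frobeniusTrace, add_pow_expChar_pow, sum_add_distrib]

lemma frobeniusTrace_pow_eq_self {z : R} (hz : z ^ p ^ (n * e) = z) :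
    frobeniusTrace p e n z ^ p ^ e = frobeniusTrace p e n z := by
  have hshift : ∑ j ∈ range n, z ^ p ^ ((j + 1) * e) = ∑ j ∈ range n, z ^ p ^ (j * e) := by
    have := (sum_range_succ' (fun j => z ^ p ^ (j * e)) n).symm.trans
      (sum_range_succ (fun j => z ^ p ^ (j * e)) n)
    simpa [hz] using this
  rw [frobeniusTrace, ← iterateFrobenius_def, map_sum]
  simpa only [iterateFrobenius_def, ← pow_mul, ← pow_add, add_one_mul, add_comm e] using hshift

end FrobeniusTrace

lemma exists_frobeniusTrace_ne_zero {F : Type*} [Field F] [Fintype F] {p e n : ℕ} (hp : 1 < p)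
    (he : 0 < e) (hcard : p ^ ((n - 1) * e) < Fintype.card F) (hn : 0 < n) :
    ∃ z : F, frobeniusTrace p e n z ≠ 0 := by
  by_contra! htrace
  set P : F[X] := ∑ j ∈ range n, X ^ p ^ (j * e)
  have hP_eval : ∀ z, P.eval z = 0 := fun z => by
    simpa [P, eval_finsetSum, frobeniusTrace] using htrace z
  have hP_coeff : P.coeff 1 = 1 := by
    rw [finsetSum_coeff, sum_eq_single_of_mem 0 (mem_range.2 hn)]
    · simp
    · intro j _ hj
      have hexp : p ^ (j * e) ≠ 1 := by simp [hp.ne', hj, he.ne']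
      rw [coeff_X_pow, if_neg hexp.symm]
  have hP_deg : P.natDegree < Fintype.card F := by
    refine lt_of_le_of_lt (natDegree_sum_le_of_forall_le _ _ fun j hj => ?_) hcard
    rw [natDegree_X_pow]
    exact Nat.pow_le_pow_right (by omega) (Nat.mul_le_mul_right e (by have := mem_range.1 hj; omega))
  have := eq_zero_of_natDegree_lt_card_of_eval_eq_zero P Function.injective_id hP_eval hP_deg
  simp [this] at hP_coeff

lemma exists_frobeniusTrace_mul_ne_zero {F : Type*} [Field F] [Fintype F] {p e n : ℕ}
    (hp : 1 < p) (he : 0 < e) (hcard : p ^ ((n - 1) * e) < Fintype.card F) (hn : 0 < n)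
    {c : F} (hc : c ≠ 0) : ∃ x, frobeniusTrace p e n (x * c) ≠ 0 := by
  obtain ⟨z, hz⟩ := exists_frobeniusTrace_ne_zero hp he hcard hn
  exact ⟨z * c⁻¹, by rwa [inv_mul_cancel_right₀ hc]⟩

lemma pow_half_succ_pow_self_eq_neg {M : Type*} [CommRing M] [NoZeroDivisors M] {s : ℕ}
    (hs : Odd s) (hs1 : 1 < s) {γ : M} (hγ : orderOf γ = s ^ 2 - 1) :
    (γ ^ ((s + 1) / 2)) ^ s = -γ ^ ((s + 1) / 2) := by
  obtain ⟨k, rfl⟩ := hs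
  have hk : 2 * k * (k + 1) ≠ 0 := mul_ne_zero (by omega) k.succ_ne_zero
  have horder : orderOf γ = 2 * (2 * k * (k + 1)) := by
    rw [hγ]; apply Nat.sub_eq_of_eq_add; ring
  have hhalf : γ ^ (2 * k * (k + 1)) = -1 := by
    have := (IsPrimitiveRoot.orderOf γ).pow_of_dvd hk (horder ▸ dvd_mul_left _ _)
    rw [horder, Nat.mul_div_cancel _ (Nat.pos_of_ne_zero hk)] at this
    exact this.eq_neg_one_of_two_right
  rw [show (2 * k + 1 + 1) / 2 = k + 1 by omega, ← pow_mul,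
    show (k + 1) * (2 * k + 1) = 2 * k * (k + 1) + (k + 1) by ring, pow_add, hhalf, neg_one_mul]

/-- Let `q = p^{2er}` be an odd prime power (a perfect square), `r ≥ 2`, `γ` a primitive
element of `F_q`, `δ = γ^{(√q+1)/2}` where `√q = p^{er}`, and `L(X) = δ X^{√q}`.
Then `f(x,y) = Tr_{q/p^e}(x·L(y))` is a non-degenerate alternating
`F_{p^e}`-bilinear form on `F_q` viewed as a `2r`-dimensional `F_{p^e}`-vector space;
here `Tr_{q/p^e}(z) = Σ_{j<2r} z^{p^{je}}`, its values are fixed by the `p^e`-power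
Frobenius (i.e. lie in `F_{p^e}`), alternating means `f(x,x) = 0` for all `x`, and
`F_{p^e}`-bilinearity is expressed by additivity in each variable together with
homogeneity with respect to elements fixed by the `p^e`-power Frobenius. -/
theorem statement_3 (p e r : ℕ) (hp : p.Prime) (hpodd : Odd p)
    (he : 0 < e) (hr : 2 ≤ r)
    (F : Type*) [Field F] [Fintype F] (hF : Fintype.card F = p ^ (2 * e * r))
    (γ : F) (hγ : orderOf γ = Fintype.card F - 1)
    (δ : F) (hδ : δ = γ ^ ((p ^ (e * r) + 1) / 2))
    (Tr : F → F) (hTr : ∀ z, Tr z = ∑ j ∈ Finset.range (2 * r), z ^ p ^ (j * e))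
    (f : F → F → F) (hf : ∀ x y, f x y = Tr (x * (δ * y ^ p ^ (e * r)))) :
    (∀ x y, (f x y) ^ p ^ e = f x y) ∧
    (∀ x₁ x₂ y, f (x₁ + x₂) y = f x₁ y + f x₂ y) ∧
    (∀ x y₁ y₂, f x (y₁ + y₂) = f x y₁ + f x y₂) ∧
    (∀ θ x y, θ ^ p ^ e = θ → f (θ * x) y = θ * f x y ∧ f x (θ * y) = θ * f x y) ∧
    (∀ x, f x x = 0) ∧
    (∀ y, (∀ x, f x y = 0) → y = 0) := by
  have : Fact p.Prime := ⟨hp⟩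
  have : CharP F p := charP_of_card_eq_prime_pow hF
  obtain rfl : Tr = frobeniusTrace p e (2 * r) := funext hTr
  have hcard : Fintype.card F = (p ^ (e * r)) ^ 2 := by rw [hF, ← pow_mul]; ring_nf
  have hfrob_card : ∀ z : F, z ^ p ^ (2 * r * e) = z := fun z => by
    rw [mul_right_comm, ← hF, FiniteField.pow_card]
  have hfrob_sq : ∀ x : F, (x ^ p ^ (e * r)) ^ p ^ (e * r) = x := fun x => by
    rw [← pow_mul, ← sq, ← hcard, FiniteField.pow_card]
  have hδ_frob : δ ^ p ^ (e * r) = -δ := hδ ▸ pow_half_succ_pow_self_eq_neg hpodd.pow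
    (Nat.one_lt_pow (by positivity) hp.one_lt) (hcard ▸ hγ)
  have hγ0 : γ ≠ 0 :=
    (orderOf_ne_zero_iff.mp (by have := Fintype.one_lt_card (α := F); omega)).isUnit.ne_zero
  simp only [hf]
  refine ⟨fun x y => frobeniusTrace_pow_eq_self p e _ (hfrob_card _),
    fun x₁ x₂ y => by simp only [add_mul, frobeniusTrace_add],
    fun x y₁ y₂ => by simp only [add_pow_char_pow, mul_add, frobeniusTrace_add],
    fun θ x y hθ => ⟨?_, ?_⟩, fun x => ?_, fun y hy => ?_⟩
  · simp only [mul_assoc, frobeniusTrace_mul_of_pow_eq_self _ hθ]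
  · rw [mul_pow, mul_comm e, pow_pow_mul_eq_self_of_pow_eq_self hθ, mul_left_comm δ,
      mul_left_comm x, frobeniusTrace_mul_of_pow_eq_self _ hθ]
  · refine frobeniusTrace_two_mul_eq_zero hpodd ?_
    rw [mul_comm r, mul_pow, mul_pow, hδ_frob, hfrob_sq]
    ring
  · by_contra hy0
    have hcard_gt : p ^ ((2 * r - 1) * e) < Fintype.card F := by
      rw [hF, mul_right_comm]
      exact Nat.pow_lt_pow_right hp.one_lt (Nat.mul_lt_mul_of_pos_right (by omega) he)
    obtain ⟨x, hx⟩ := exists_frobeniusTrace_mul_ne_zero hp.one_lt he hcard_gt (by omega)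
      (mul_ne_zero (hδ ▸ pow_ne_zero _ hγ0) (pow_ne_zero _ hy0))
    exact hx (hy x)
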